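/- If G[S] is a locally triangle-densest subgraph (LTDS) of G, then every vertex u ∈ S has triangle-compact number φ_tr(u) = tr-density(G[S]), and for every edge (u,v) with u ∈ S and v ∉ S, φ_tr(u) > φ_tr(v). -/

import Mathlib

open Finset

variable {V : Type*} [Fintype V] [DecidableEq V]

/-- The set of triangles (3-cliques) of `G`, as 3-element vertex sets. -/
def triFinset (G : SimpleGraph V) [DecidableRel G.Adj] : Finset (Finset V) :=
  Finset.univ.filter fun t => t.card = 3 ∧ ∀ u ∈ t, ∀ v ∈ t, u ≠ v → G.Adj u v

/-- Number of triangles of `G` with all vertices in `S`. -/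
def triCount (G : SimpleGraph V) [DecidableRel G.Adj] (S : Finset V) : ℕ :=
  ((triFinset G).filter fun t => t ⊆ S).card

/-- Triangle density |T(G[S])|/|S|. -/
noncomputable def trDensity (G : SimpleGraph V) [DecidableRel G.Adj] (S : Finset V) : ℝ :=
  (triCount G S : ℝ) / (S.card : ℝ)

/-- `G[S]` is ρ-tr-compact: connected, and removing any nonempty `U ⊆ S`
removes at least `ρ * |U|` triangles. -/
def IsTrCompactSub (G : SimpleGraph V) [DecidableRel G.Adj] (ρ : ℝ) (S : Finset V) : Prop :=
  0 ≤ ρ ∧ (G.induce (S : Set V)).Connected ∧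
  ∀ U ⊆ S, U.Nonempty →
    ρ * (U.card : ℝ) ≤ (triCount G S : ℝ) - (triCount G (S \ U) : ℝ)

/-- `G[S]` is a locally triangle-densest subgraph. -/
def IsLTDS (G : SimpleGraph V) [DecidableRel G.Adj] (S : Finset V) : Prop :=
  IsTrCompactSub G (trDensity G S) S ∧
  ∀ S' : Finset V, S ⊂ S' → ¬ IsTrCompactSub G (trDensity G S) S'

/-- The triangle-compact number of `u`. -/
noncomputable def trCompactNum (G : SimpleGraph V) [DecidableRel G.Adj] (u : V) : ℝ :=
  sSup {ρ : ℝ | ∃ S : Finset V, u ∈ S ∧ IsTrCompactSub G ρ S}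

/-- Feasibility for the triangle convex program CP_tr(G). -/
def CPtrFeasible (G : SimpleGraph V) [DecidableRel G.Adj]
    (r : V → ℝ) (α : V → Finset V → ℝ) : Prop :=
  (∀ u, r u = ∑ t ∈ (triFinset G).filter (fun t => u ∈ t), α u t) ∧
  (∀ t ∈ triFinset G, ∑ u ∈ t, α u t = 1) ∧
  (∀ t ∈ triFinset G, ∀ u ∈ t, 0 ≤ α u t)

/-- Optimality for CP_tr(G). -/
def CPtrOptimal (G : SimpleGraph V) [DecidableRel G.Adj]
    (r : V → ℝ) (α : V → Finset V → ℝ) : Prop :=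
  CPtrFeasible G r α ∧
  ∀ r' α', CPtrFeasible G r' α' → ∑ u, (r u) ^ 2 ≤ ∑ u, (r' u) ^ 2

/-! ### Auxiliary lemmas -/

lemma triCount_mono (G : SimpleGraph V) [DecidableRel G.Adj] {A B : Finset V} (h : A ⊆ B) :
    triCount G A ≤ triCount G B :=
  Finset.card_le_card (Finset.monotone_filter_right _ fun t _ ht => ht.trans h)

lemma triCount_empty (G : SimpleGraph V) [DecidableRel G.Adj] : triCount G (∅ : Finset V) = 0 := by
  rw [triCount, Finset.card_eq_zero, Finset.filter_eq_empty_iff]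
  intro t ht hsub
  have h3 : t.card = 3 := (Finset.mem_filter.1 ht).2.1
  rw [Finset.subset_empty.1 hsub] at h3
  simp at h3

/-- The triangles inside `X` that are destroyed by deleting `W`. -/
def remTris (G : SimpleGraph V) [DecidableRel G.Adj] (X W : Finset V) : Finset (Finset V) :=
  ((triFinset G).filter fun t => t ⊆ X) \ ((triFinset G).filter fun t => t ⊆ X \ W)

lemma remTris_card (G : SimpleGraph V) [DecidableRel G.Adj] (X W : Finset V) :
    ((remTris G X W).card : ℝ) = (triCount G X : ℝ) - (triCount G (X \ W) : ℝ) := by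
  have hsub : ((triFinset G).filter fun t => t ⊆ X \ W) ⊆ ((triFinset G).filter fun t => t ⊆ X) :=
    Finset.monotone_filter_right _ fun t _ ht => ht.trans (Finset.sdiff_subset)
  rw [remTris, Finset.card_sdiff_of_subset hsub, triCount, triCount,
    Nat.cast_sub (Finset.card_le_card hsub)]

lemma compact_nonempty {G : SimpleGraph V} [DecidableRel G.Adj] {ρ : ℝ} {T : Finset V}
    (h : IsTrCompactSub G ρ T) : T.Nonempty := by
  obtain ⟨⟨x, hx⟩⟩ := h.2.1.nonempty
  exact ⟨x, hx⟩

lemma induce_singleton_connected (G : SimpleGraph V) (v : V) :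
    (G.induce (↑({v} : Finset V) : Set V)).Connected := by
  rw [SimpleGraph.connected_iff]
  refine ⟨?_, ⟨⟨v, by simp⟩⟩⟩
  · intro a b
    have : a = b := by
      apply Subtype.ext
      have ha := a.2
      have hb := b.2
      simp only [Finset.coe_singleton, Set.mem_singleton_iff] at ha hb
      rw [ha, hb]
    rw [this]

lemma singleton_compact (G : SimpleGraph V) [DecidableRel G.Adj] (v : V) :
    IsTrCompactSub G 0 ({v} : Finset V) := by
  refine ⟨le_refl _, induce_singleton_connected G v, ?_⟩
  intro U _ _
  rw [zero_mul, sub_nonneg]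
  exact_mod_cast triCount_mono G (Finset.sdiff_subset)

lemma union_compact {G : SimpleGraph V} [DecidableRel G.Adj] {ρ ρa ρb : ℝ} {A B : Finset V}
    (hA : IsTrCompactSub G ρa A) (hB : IsTrCompactSub G ρb B)
    (hρ : 0 ≤ ρ) (hρa : ρ ≤ ρa) (hρb : ρ ≤ ρb)
    (hconn : (G.induce (↑(A ∪ B) : Set V)).Connected) :
    IsTrCompactSub G ρ (A ∪ B) := by
  refine ⟨hρ, hconn, ?_⟩
  intro U hU _
  set UA := U ∩ A with hUAdef
  set UB := U \ A with hUBdef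
  have hcardsplit : UA.card + UB.card = U.card := Finset.card_inter_add_card_sdiff U A
  set RA := remTris G A UA with hRAdef
  set RB := remTris G B UB with hRBdef
  set RU := remTris G (A ∪ B) U with hRUdef
  have hRAsub : RA ⊆ RU := by
    intro t ht
    rw [hRAdef, remTris, Finset.mem_sdiff, Finset.mem_filter, Finset.mem_filter] at ht
    obtain ⟨⟨htri, htA⟩, hnot⟩ := ht
    rw [hRUdef, remTris, Finset.mem_sdiff, Finset.mem_filter, Finset.mem_filter]
    refine ⟨⟨htri, htA.trans Finset.subset_union_left⟩, ?_⟩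
    intro hcon
    obtain ⟨x, hxt, hx⟩ := Finset.not_subset.1 (fun hs => hnot ⟨htri, hs⟩)
    have hxA : x ∈ A := htA hxt
    have hxUA : x ∈ UA := by
      by_contra hxUA
      exact hx (Finset.mem_sdiff.2 ⟨hxA, hxUA⟩)
    have hxU : x ∈ U := (Finset.mem_inter.1 hxUA).1
    exact (Finset.mem_sdiff.1 (hcon.2 hxt)).2 hxU
  have hRBsub : RB ⊆ RU := by
    intro t ht
    rw [hRBdef, remTris, Finset.mem_sdiff, Finset.mem_filter, Finset.mem_filter] at ht
    obtain ⟨⟨htri, htB⟩, hnot⟩ := ht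
    rw [hRUdef, remTris, Finset.mem_sdiff, Finset.mem_filter, Finset.mem_filter]
    refine ⟨⟨htri, htB.trans Finset.subset_union_right⟩, ?_⟩
    intro hcon
    obtain ⟨x, hxt, hx⟩ := Finset.not_subset.1 (fun hs => hnot ⟨htri, hs⟩)
    have hxB : x ∈ B := htB hxt
    have hxUB : x ∈ UB := by
      by_contra hxUB
      exact hx (Finset.mem_sdiff.2 ⟨hxB, hxUB⟩)
    have hxU : x ∈ U := (Finset.mem_sdiff.1 hxUB).1
    exact (Finset.mem_sdiff.1 (hcon.2 hxt)).2 hxU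
  have hdisj : Disjoint RA RB := by
    rw [Finset.disjoint_left]
    intro t htRA htRB
    rw [hRAdef, remTris, Finset.mem_sdiff, Finset.mem_filter] at htRA
    obtain ⟨⟨_, htA⟩, _⟩ := htRA
    rw [hRBdef, remTris, Finset.mem_sdiff, Finset.mem_filter] at htRB
    obtain ⟨⟨htri, htB⟩, hnot⟩ := htRB
    obtain ⟨x, hxt, hx⟩ :=
      Finset.not_subset.1 (fun hs => hnot (Finset.mem_filter.2 ⟨htri, hs⟩))
    have hxB : x ∈ B := htB hxt
    have hxUB : x ∈ UB := by
      by_contra hxUB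
      exact hx (Finset.mem_sdiff.2 ⟨hxB, hxUB⟩)
    exact (Finset.mem_sdiff.1 hxUB).2 (htA hxt)
  have hcards : (RA.card : ℝ) + (RB.card : ℝ) ≤ (RU.card : ℝ) := by
    have := Finset.card_le_card (Finset.union_subset hRAsub hRBsub)
    rw [Finset.card_union_of_disjoint hdisj] at this
    exact_mod_cast this
  have hA' : ρ * (UA.card : ℝ) ≤ (RA.card : ℝ) := by
    rcases UA.eq_empty_or_nonempty with he | hne
    · rw [he]
      simpa using (RA.card.cast_nonneg : (0:ℝ) ≤ RA.card)
    · calc ρ * (UA.card : ℝ) ≤ ρa * (UA.card : ℝ) :=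
            mul_le_mul_of_nonneg_right hρa (Nat.cast_nonneg _)
        _ ≤ (RA.card : ℝ) := by
            rw [hRAdef, remTris_card]
            exact hA.2.2 UA Finset.inter_subset_right hne
  have hB' : ρ * (UB.card : ℝ) ≤ (RB.card : ℝ) := by
    rcases UB.eq_empty_or_nonempty with he | hne
    · rw [he]
      simpa using (RB.card.cast_nonneg : (0:ℝ) ≤ RB.card)
    · have hUBB : UB ⊆ B := by
        intro x hx
        rcases Finset.mem_union.1 (hU (Finset.mem_sdiff.1 hx).1) with h | h
        · exact absurd h (Finset.mem_sdiff.1 hx).2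
        · exact h
      calc ρ * (UB.card : ℝ) ≤ ρb * (UB.card : ℝ) :=
            mul_le_mul_of_nonneg_right hρb (Nat.cast_nonneg _)
        _ ≤ (RB.card : ℝ) := by
            rw [hRBdef, remTris_card]
            exact hB.2.2 UB hUBB hne
  have hfinal : ρ * (U.card : ℝ) ≤ (RU.card : ℝ) := by
    have : ρ * (U.card : ℝ) = ρ * (UA.card : ℝ) + ρ * (UB.card : ℝ) := by
      rw [← mul_add]
      congr 1
      exact_mod_cast (hcardsplit.symm)
    rw [this]
    exact le_trans (add_le_add hA' hB') hcards
  rw [hRUdef, remTris_card] at hfinal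
  exact hfinal

lemma subset_rho_le {G : SimpleGraph V} [DecidableRel G.Adj] {ρ : ℝ} {S T : Finset V}
    (hS : IsTrCompactSub G (trDensity G S) S)
    (hT : IsTrCompactSub G ρ T) (hTS : T ⊆ S) : ρ ≤ trDensity G S := by
  set d := trDensity G S with hd
  have hTne : T.Nonempty := compact_nonempty hT
  have hSne : S.Nonempty := hTne.mono hTS
  have hScard : (0:ℝ) < (S.card : ℝ) := by exact_mod_cast Finset.card_pos.2 hSne
  have hTcard : (0:ℝ) < (T.card : ℝ) := by exact_mod_cast Finset.card_pos.2 hTne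
  have htriS : (triCount G S : ℝ) = d * (S.card : ℝ) := by
    rw [hd, trDensity, div_mul_cancel₀]
    exact ne_of_gt hScard
  have h1 : ρ * (T.card : ℝ) ≤ (triCount G T : ℝ) := by
    have := hT.2.2 T (le_refl _) hTne
    rwa [Finset.sdiff_self, triCount_empty, Nat.cast_zero, sub_zero] at this
  have h2 : d * ((S \ T).card : ℝ) ≤ (triCount G S : ℝ) - (triCount G T : ℝ) := by
    rcases (S \ T).eq_empty_or_nonempty with he | hne
    · have hST : S = T := le_antisymm (Finset.sdiff_eq_empty_iff_subset.1 he) hTS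
      rw [he, hST]
      simp
    · have := hS.2.2 (S \ T) Finset.sdiff_subset hne
      rwa [Finset.sdiff_sdiff_eq_self hTS] at this
  have hcard : ((S \ T).card : ℝ) + (T.card : ℝ) = (S.card : ℝ) := by
    have := Finset.card_sdiff_add_card_eq_card hTS
    exact_mod_cast this
  have : ρ * (T.card : ℝ) ≤ d * (T.card : ℝ) := by
    nlinarith [h1, h2, htriS, hcard]
  exact le_of_mul_le_mul_right (by linarith [this]) hTcard

/-- Candidate ratios for the maximal compactness of `T`. -/
noncomputable def cands (G : SimpleGraph V) [DecidableRel G.Adj] (T : Finset V) : Finset ℝ :=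
  (T.powerset.filter Finset.Nonempty).image
    (fun U => ((triCount G T : ℝ) - (triCount G (T \ U) : ℝ)) / (U.card : ℝ))

lemma cands_nonempty {G : SimpleGraph V} [DecidableRel G.Adj] {T : Finset V}
    (h : T.Nonempty) : (cands G T).Nonempty := by
  refine ⟨_, Finset.mem_image.2 ⟨T, ?_, rfl⟩⟩
  rw [Finset.mem_filter, Finset.mem_powerset]
  exact ⟨le_refl _, h⟩

noncomputable def maxRho (G : SimpleGraph V) [DecidableRel G.Adj] (T : Finset V) : ℝ :=
  if h : (cands G T).Nonempty then (cands G T).min' h else 0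

lemma maxRho_nonneg (G : SimpleGraph V) [DecidableRel G.Adj] (T : Finset V) :
    0 ≤ maxRho G T := by
  rw [maxRho]
  split_ifs with h
  · apply Finset.le_min'
    intro y hy
    obtain ⟨U, hU, rfl⟩ := Finset.mem_image.1 hy
    apply div_nonneg _ (Nat.cast_nonneg _)
    rw [sub_nonneg]
    exact_mod_cast triCount_mono G (Finset.sdiff_subset)
  · exact le_refl _

lemma maxRho_compact {G : SimpleGraph V} [DecidableRel G.Adj] {T : Finset V}
    (hne : T.Nonempty) (hconn : (G.induce (↑T : Set V)).Connected) :
    IsTrCompactSub G (maxRho G T) T := by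
  refine ⟨maxRho_nonneg G T, hconn, ?_⟩
  intro U hUT hUne
  have hUcard : (0:ℝ) < (U.card : ℝ) := by exact_mod_cast Finset.card_pos.2 hUne
  have hmem : ((triCount G T : ℝ) - (triCount G (T \ U) : ℝ)) / (U.card : ℝ) ∈ cands G T :=
    Finset.mem_image.2 ⟨U, Finset.mem_filter.2 ⟨Finset.mem_powerset.2 hUT, hUne⟩, rfl⟩
  have : maxRho G T ≤ ((triCount G T : ℝ) - (triCount G (T \ U) : ℝ)) / (U.card : ℝ) := by
    rw [maxRho, dif_pos (cands_nonempty hne)]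
    exact Finset.min'_le _ _ hmem
  rwa [le_div_iff₀ hUcard] at this

lemma le_maxRho {G : SimpleGraph V} [DecidableRel G.Adj] {ρ : ℝ} {T : Finset V}
    (h : IsTrCompactSub G ρ T) : ρ ≤ maxRho G T := by
  have hne : T.Nonempty := compact_nonempty h
  rw [maxRho, dif_pos (cands_nonempty hne)]
  apply Finset.le_min'
  intro y hy
  obtain ⟨U, hU, rfl⟩ := Finset.mem_image.1 hy
  rw [Finset.mem_filter, Finset.mem_powerset] at hU
  have hUcard : (0:ℝ) < (U.card : ℝ) := by exact_mod_cast Finset.card_pos.2 hU.2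
  rw [le_div_iff₀ hUcard]
  exact h.2.2 U hU.1 hU.2

open scoped Classical in
lemma trCompactNum_attained (G : SimpleGraph V) [DecidableRel G.Adj] (w : V) :
    ∃ T : Finset V, w ∈ T ∧ IsTrCompactSub G (trCompactNum G w) T := by
  classical
  let C : Finset (Finset V) :=
    Finset.univ.filter (fun T => w ∈ T ∧ (G.induce (↑T : Set V)).Connected)
  have hC : ({w} : Finset V) ∈ C := by
    rw [Finset.mem_filter]
    exact ⟨Finset.mem_univ _, Finset.mem_singleton_self w, induce_singleton_connected G w⟩
  obtain ⟨T₀, hT₀C, hT₀max⟩ := Finset.exists_max_image C (maxRho G) ⟨_, hC⟩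
  rw [Finset.mem_filter] at hT₀C
  obtain ⟨_, hwT₀, hT₀conn⟩ := hT₀C
  have hT₀ne : T₀.Nonempty := ⟨w, hwT₀⟩
  have hgreat : IsGreatest {ρ : ℝ | ∃ S : Finset V, w ∈ S ∧ IsTrCompactSub G ρ S}
      (maxRho G T₀) := by
    constructor
    · exact ⟨T₀, hwT₀, maxRho_compact hT₀ne hT₀conn⟩
    · rintro ρ ⟨T, hwT, hT⟩
      have hTC : T ∈ C := Finset.mem_filter.2 ⟨Finset.mem_univ _, hwT, hT.2.1⟩
      exact le_trans (le_maxRho hT) (hT₀max T hTC)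
  have : trCompactNum G w = maxRho G T₀ := hgreat.csSup_eq
  rw [this]
  exact ⟨T₀, hwT₀, maxRho_compact hT₀ne hT₀conn⟩

/-- vertices of an LTDS have tr-compact number equal to its
triangle density, and boundary edges decrease the tr-compact number. -/
theorem ltds_trCompactNum (G : SimpleGraph V) [DecidableRel G.Adj]
    (S : Finset V) (h : IsLTDS G S) :
    (∀ u ∈ S, trCompactNum G u = trDensity G S) ∧
    (∀ u ∈ S, ∀ v ∉ S, G.Adj u v → trCompactNum G u > trCompactNum G v) := by
  obtain ⟨hcomp, hmax⟩ := h
  have hρ0 : 0 ≤ trDensity G S := hcomp.1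
  -- any compact subgraph meeting S has compactness at most the density of S
  have key : ∀ ρ (T : Finset V), (T ∩ S).Nonempty → IsTrCompactSub G ρ T →
      ρ ≤ trDensity G S := by
    intro ρ T hint hT
    by_cases hsub : T ⊆ S
    · exact subset_rho_le hcomp hT hsub
    · by_contra hlt
      push_neg at hlt
      have hconn : (G.induce (↑(S ∪ T) : Set V)).Connected := by
        rw [Finset.coe_union]
        refine SimpleGraph.induce_union_connected hcomp.2.1.preconnected hT.2.1.preconnected ?_
        obtain ⟨x, hx⟩ := hint
        rw [Finset.mem_inter] at hx
        exact ⟨x, hx.2, hx.1⟩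
      have hcu := union_compact hcomp hT hρ0 (le_refl _) (le_of_lt hlt) hconn
      obtain ⟨x, hxT, hxS⟩ := Finset.not_subset.1 hsub
      exact hmax (S ∪ T)
        ((Finset.ssubset_iff_of_subset Finset.subset_union_left).2
          ⟨x, Finset.mem_union_right _ hxT, hxS⟩) hcu
  have part1 : ∀ u ∈ S, trCompactNum G u = trDensity G S := by
    intro u hu
    have h0 : (0:ℝ) ∈ {ρ : ℝ | ∃ S : Finset V, u ∈ S ∧ IsTrCompactSub G ρ S} :=
      ⟨{u}, Finset.mem_singleton_self u, singleton_compact G u⟩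
    apply le_antisymm
    · apply csSup_le ⟨0, h0⟩
      rintro ρ ⟨T, huT, hT⟩
      exact key ρ T ⟨u, Finset.mem_inter.2 ⟨huT, hu⟩⟩ hT
    · apply le_csSup
      · refine ⟨trDensity G S, ?_⟩
        rintro ρ ⟨T, huT, hT⟩
        exact key ρ T ⟨u, Finset.mem_inter.2 ⟨huT, hu⟩⟩ hT
      · exact ⟨S, hu, hcomp⟩
  refine ⟨part1, ?_⟩
  intro u hu v hv hadj
  rw [gt_iff_lt, part1 u hu]
  by_contra hle
  push_neg at hle
  obtain ⟨T, hvT, hT⟩ := trCompactNum_attained G v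
  have hconn : (G.induce (↑(S ∪ T) : Set V)).Connected := by
    rw [Finset.coe_union]
    exact SimpleGraph.connected_induce_union hcomp.2.1.preconnected hT.2.1.preconnected
      (Finset.mem_coe.2 hu) (Finset.mem_coe.2 hvT) hadj
  have hcu := union_compact hcomp hT hρ0 (le_refl _) hle hconn
  exact hmax (S ∪ T)
    ((Finset.ssubset_iff_of_subset Finset.subset_union_left).2
      ⟨v, Finset.mem_union_right _ hvT, hv⟩) hcu
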